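/- Let n ≥ 1, let w : Fin n → Fin n → EReal have all entries in {−1, 0, 1, ⊤}, and let w_c be a canonical graph of w with d_{w_c}(p,q) = d_w(p,q) for all p,q; write d = d_{w_c} and t*(p,q) = halve(d(p,q)). Fix i, j with d(i,j) finite (an integer). If min over k ∈ Fin n of max(t*(i,k), x⁺(k,j)) equals t*(i,j) − 1, or min over k ∈ Fin n of max(t*(i,k), x⁻(k,j)) equals t*(i,j), then d(i,j) = 2·t*(i,j) − 1; otherwise d(i,j) = 2·t*(i,j). -/

import Mathlib

open scoped BigOperators

namespace MinMaxAPSP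

/-- `p` is a walk from `i` to `j` with `ℓ` hops in the graph with weight matrix `w`
(an ordered pair is an edge iff its weight is not `⊤`). -/
def IsWalk {n : ℕ} (w : Fin n → Fin n → EReal) (i j : Fin n) (ℓ : ℕ)
    (p : Fin (ℓ+1) → Fin n) : Prop :=
  p 0 = i ∧ p (Fin.last ℓ) = j ∧ ∀ k : Fin ℓ, w (p k.castSucc) (p k.succ) ≠ ⊤

/-- The weight of a walk with `ℓ` hops. -/
noncomputable def walkWeight {n : ℕ} (w : Fin n → Fin n → EReal) (ℓ : ℕ)
    (p : Fin (ℓ+1) → Fin n) : EReal :=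
  ∑ k : Fin ℓ, w (p k.castSucc) (p k.succ)

/-- The distance from `i` to `j`: the infimum of the weights of all walks from `i` to `j`
(`⊤` if there is no walk). -/
noncomputable def dist {n : ℕ} (w : Fin n → Fin n → EReal) (i j : Fin n) : EReal :=
  sInf {x : EReal | ∃ ℓ, ∃ p : Fin (ℓ+1) → Fin n, IsWalk w i j ℓ p ∧ walkWeight w ℓ p = x}

/-- The infimum of the weights of all walks from `i` to `j` with at most `δ` hops
(`⊤` if there is no such walk). -/
noncomputable def distLE {n : ℕ} (w : Fin n → Fin n → EReal) (δ : ℕ) (i j : Fin n) : EReal :=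
  sInf {x : EReal | ∃ ℓ ≤ δ, ∃ p : Fin (ℓ+1) → Fin n, IsWalk w i j ℓ p ∧ walkWeight w ℓ p = x}

/-- `w` is `δ`-regular. -/
def IsRegular {n : ℕ} (w : Fin n → Fin n → EReal) (δ : ℕ) : Prop :=
  ∀ i j : Fin n,
    (dist w i j ≠ ⊥ → dist w i j = distLE w δ i j) ∧
    (dist w i j = ⊥ →
      ∃ ℓ ≤ δ, ∃ p : Fin (ℓ+1) → Fin n, IsWalk w i j ℓ p ∧ walkWeight w ℓ p < 0)

/-- All entries of `w` are in `{-1, 0, 1, ⊤}`. -/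
def EntriesInMinusOneZeroOneTop {n : ℕ} (w : Fin n → Fin n → EReal) : Prop :=
  ∀ i j, w i j = -1 ∨ w i j = 0 ∨ w i j = 1 ∨ w i j = ⊤

/-- `p` is a shortest walk from `i` to `j` under `w`. -/
def IsShortestWalk {n : ℕ} (w : Fin n → Fin n → EReal) (i j : Fin n) (ℓ : ℕ)
    (p : Fin (ℓ+1) → Fin n) : Prop :=
  IsWalk w i j ℓ p ∧ walkWeight w ℓ p = dist w i j

/-- `wc` is a canonical graph of `w`. -/
def IsCanonical {n : ℕ} (w wc : Fin n → Fin n → EReal) : Prop :=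
  EntriesInMinusOneZeroOneTop wc ∧
  ∀ (i j : Fin n) (ℓ : ℕ) (p : Fin (ℓ+1) → Fin n), IsShortestWalk w i j ℓ p →
    ∃ ℓ' ≤ ℓ, ∃ p' : Fin (ℓ'+1) → Fin n,
      IsShortestWalk wc i j ℓ' p' ∧
      walkWeight wc ℓ' p' = walkWeight w ℓ p ∧
      (ℓ' = 1 ∨ ∀ k : Fin ℓ', wc (p' k.castSucc) (p' k.succ) ≠ 0)

/-- `halve x = ⌈x/2⌉` for finite `x`, and `halve (⊥) = ⊥`, `halve (⊤) = ⊤`. -/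
noncomputable def halve (x : EReal) : EReal :=
  if x = ⊤ then ⊤ else if x = ⊥ then ⊥ else (((⌈x.toReal / 2⌉ : ℤ) : ℝ) : EReal)

/-!
Let `m = d(i,j)`, an integer since all weights are, and `t = ⌈m/2⌉`. An edge `k → j` of weight
`e` gives `d(i,k) ≥ m - e`, so the `x⁺`-product is at least `⌈(m-1)/2⌉` and the `x⁻`-product at
least `⌈(m+1)/2⌉`; for even `m` these are `t` and `t + 1`, so neither test succeeds. For odd `m`,
the canonical graph has a shortest walk to `j` whose last edge `k → j` has weight `e = ±1` (it has
no zero edge, or is that single edge and has weight `m ≠ 0`), and its prefix gives `d(i,k) ≤ m - e`.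
So the corresponding product is exactly `⌈(m-e)/2⌉`, which is `t - 1` for `e = 1` and `t` for
`e = -1`.
-/

variable {n : ℕ} {w : Fin n → Fin n → EReal} {i j k : Fin n} {ℓ : ℕ}

lemma sInf_mem_of_forall_eq_intCast {S : Set EReal}
    (hS : ∀ x ∈ S, ∃ z : ℤ, x = ((z : ℝ) : EReal)) (htop : sInf S ≠ ⊤) (hbot : sInf S ≠ ⊥) :
    sInf S ∈ S := by
  obtain ⟨x, hx⟩ : S.Nonempty := Set.nonempty_iff_ne_empty.2 fun h => htop (h ▸ sInf_empty)
  have hbdd : ∃ b : ℤ, ∀ z : ℤ, ((z : ℝ) : EReal) ∈ S → b ≤ z := by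
    refine ⟨⌈(sInf S).toReal⌉, fun z hz => Int.ceil_le.2 ?_⟩
    have := sInf_le hz
    rwa [← EReal.coe_toReal htop hbot, EReal.coe_le_coe_iff] at this
  obtain ⟨z₀, hz₀, hleast⟩ :=
    Int.exists_least_of_bdd hbdd (by obtain ⟨z, rfl⟩ := hS x hx; exact ⟨z, hx⟩)
  suffices sInf S = ((z₀ : ℝ) : EReal) by rwa [this]
  refine le_antisymm (sInf_le hz₀) (le_sInf fun y hy => ?_)
  obtain ⟨z, rfl⟩ := hS y hy
  exact_mod_cast hleast z hy

def IsIntWeighted (w : Fin n → Fin n → EReal) : Prop :=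
  ∀ a b, w a b ≠ ⊤ → ∃ z : ℤ, w a b = ((z : ℝ) : EReal)

lemma EntriesInMinusOneZeroOneTop.isIntWeighted (hw : EntriesInMinusOneZeroOneTop w) :
    IsIntWeighted w := by
  intro a b hab
  rcases hw a b with h | h | h | h
  · exact ⟨-1, by rw [h]; norm_num⟩
  · exact ⟨0, by rw [h]; norm_num⟩
  · exact ⟨1, by rw [h]; norm_num⟩
  · exact absurd h hab

lemma walkWeight_zero (w : Fin n → Fin n → EReal) (p : Fin 1 → Fin n) :
    walkWeight w 0 p = 0 := by
  simp [walkWeight]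

lemma walkWeight_succ (w : Fin n → Fin n → EReal) (p : Fin (ℓ + 2) → Fin n) :
    walkWeight w (ℓ + 1) p
      = walkWeight w ℓ (Fin.init p) + w (p (Fin.last ℓ).castSucc) (p (Fin.last (ℓ + 1))) := by
  simp only [walkWeight, Fin.sum_univ_castSucc, Fin.init, Fin.succ_castSucc, Fin.succ_last]

lemma IsWalk.init {p : Fin (ℓ + 2) → Fin n} (h : IsWalk w i j (ℓ + 1) p) :
    IsWalk w i (p (Fin.last ℓ).castSucc) ℓ (Fin.init p) :=
  ⟨h.1, rfl, fun m => by simpa only [Fin.init, Fin.succ_castSucc] using h.2.2 m.castSucc⟩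

lemma IsWalk.snoc {p : Fin (ℓ + 1) → Fin n} (h : IsWalk w i k ℓ p) (hkj : w k j ≠ ⊤) :
    IsWalk w i j (ℓ + 1) (Fin.snoc p j) := by
  refine ⟨by simpa using h.1, by simp, fun m => ?_⟩
  induction m using Fin.lastCases with
  | last => simpa [h.2.1] using hkj
  | cast m =>
    rw [Fin.succ_castSucc, Fin.snoc_castSucc, Fin.snoc_castSucc]
    exact h.2.2 m

lemma IsWalk.lastEdge_ne_top {p : Fin (ℓ + 2) → Fin n} (h : IsWalk w i j (ℓ + 1) p) :
    w (p (Fin.last ℓ).castSucc) j ≠ ⊤ := by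
  simpa [Fin.succ_last, h.2.1] using h.2.2 (Fin.last ℓ)

lemma dist_le_walkWeight {p : Fin (ℓ + 1) → Fin n} (h : IsWalk w i j ℓ p) :
    dist w i j ≤ walkWeight w ℓ p :=
  sInf_le ⟨ℓ, p, h, rfl⟩

lemma dist_sub_le_dist_of_edge (hkj : w k j ≠ ⊤) : dist w i j - w k j ≤ dist w i k := by
  refine le_sInf ?_
  rintro _ ⟨ℓ, p, hp, rfl⟩
  refine EReal.sub_le_of_le_add ?_
  have hsnoc := dist_le_walkWeight (hp.snoc hkj)
  rwa [walkWeight_succ, Fin.init_snoc, Fin.snoc_last, Fin.snoc_castSucc, hp.2.1] at hsnoc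

lemma IsWalk.dist_init_le {p : Fin (ℓ + 2) → Fin n} {e : ℝ} (h : IsWalk w i j (ℓ + 1) p)
    (he : w (p (Fin.last ℓ).castSucc) j = e) :
    dist w i (p (Fin.last ℓ).castSucc) ≤ walkWeight w (ℓ + 1) p - e := by
  rw [walkWeight_succ, h.2.1, he, EReal.add_sub_cancel_right]
  exact dist_le_walkWeight h.init

lemma IsIntWeighted.exists_walkWeight_eq (hw : IsIntWeighted w) {p : Fin (ℓ + 1) → Fin n}
    (h : IsWalk w i j ℓ p) : ∃ z : ℤ, walkWeight w ℓ p = ((z : ℝ) : EReal) := by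
  refine Finset.sum_induction _ (fun x => ∃ z : ℤ, x = ((z : ℝ) : EReal)) ?_ ⟨0, by simp⟩
    fun m _ => hw _ _ (h.2.2 m)
  rintro _ _ ⟨a, rfl⟩ ⟨b, rfl⟩
  exact ⟨a + b, by norm_cast⟩

lemma IsIntWeighted.exists_isShortestWalk (hw : IsIntWeighted w) (htop : dist w i j ≠ ⊤)
    (hbot : dist w i j ≠ ⊥) : ∃ ℓ, ∃ p : Fin (ℓ + 1) → Fin n, IsShortestWalk w i j ℓ p := by
  obtain ⟨ℓ, p, hp, hweight⟩ := sInf_mem_of_forall_eq_intCast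
    (by rintro _ ⟨ℓ, p, hp, rfl⟩; exact hw.exists_walkWeight_eq hp) htop hbot
  exact ⟨ℓ, p, hp, hweight⟩

lemma IsIntWeighted.exists_dist_eq_intCast (hw : IsIntWeighted w) (htop : dist w i j ≠ ⊤)
    (hbot : dist w i j ≠ ⊥) : ∃ m : ℤ, dist w i j = ((m : ℝ) : EReal) := by
  obtain ⟨ℓ, p, hp, hweight⟩ := hw.exists_isShortestWalk htop hbot
  rw [← hweight]
  exact hw.exists_walkWeight_eq hp

lemma IsCanonical.exists_lastEdge_eq_one_or_neg_one {wc : Fin n → Fin n → EReal}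
    (hw : IsIntWeighted w) (hc : IsCanonical w wc) (hdc : dist wc i j = dist w i j)
    (htop : dist wc i j ≠ ⊤) (hbot : dist wc i j ≠ ⊥) (hzero : dist wc i j ≠ 0) :
    ∃ k, (wc k j = 1 ∨ wc k j = -1) ∧ dist wc i k ≤ dist wc i j - wc k j := by
  obtain ⟨ℓ, p, hp⟩ := hw.exists_isShortestWalk (hdc ▸ htop) (hdc ▸ hbot)
  obtain ⟨ℓ', -, q, hq, -, hsingle⟩ := hc.2 i j ℓ p hp
  obtain _ | ℓ' := ℓ'
  · exact absurd (hq.2 ▸ walkWeight_zero wc q) hzero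
  set k := q (Fin.last ℓ').castSucc
  have hne_zero : wc k j ≠ 0 := by
    rcases hsingle with hone | hnz
    · obtain rfl : ℓ' = 0 := by omega
      intro h
      rw [← hq.2, walkWeight_succ, walkWeight_zero, hq.1.2.1, h, add_zero] at hzero
      exact hzero rfl
    · simpa [Fin.succ_last, hq.1.2.1] using hnz (Fin.last ℓ')
  rcases hc.1 k j with h | h | h | h
  · exact ⟨k, Or.inr h, by simpa [h, hq.2] using hq.1.dist_init_le (e := -1) h⟩
  · exact absurd h hne_zero
  · exact ⟨k, Or.inl h, by simpa [h, hq.2] using hq.1.dist_init_le (e := 1) h⟩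
  · exact absurd h hq.1.lastEdge_ne_top

lemma halve_intCast (m : ℤ) : halve ((m : ℝ) : EReal) = ((((m + 1) / 2 : ℤ) : ℝ) : EReal) := by
  rw [halve, if_neg (EReal.coe_ne_top _), if_neg (EReal.coe_ne_bot _), EReal.toReal_coe]
  congr 2
  set q := (m + 1) / 2
  have h₁ : (2 * q : ℝ) ≤ m + 1 := by exact_mod_cast Int.mul_ediv_self_le two_ne_zero
  have h₂ : (m : ℝ) ≤ 2 * q := by exact_mod_cast (by omega : m ≤ 2 * q)
  rw [Int.ceil_eq_iff]
  constructor <;> linarith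

lemma two_mul_halve_intCast_sub_one_of_odd {m : ℤ} (hm : Odd m) :
    2 * halve ((m : ℝ) : EReal) - 1 = ((m : ℝ) : EReal) := by
  obtain ⟨t, rfl⟩ := hm
  rw [halve_intCast, show (2 * t + 1 + 1) / 2 = t + 1 by omega,
    show (2 : EReal) = ((2 : ℝ) : EReal) from rfl]
  norm_cast
  ring

lemma two_mul_halve_intCast_of_even {m : ℤ} (hm : Even m) :
    2 * halve ((m : ℝ) : EReal) = ((m : ℝ) : EReal) := by
  obtain ⟨t, rfl⟩ := hm
  rw [halve_intCast, show (t + t + 1) / 2 = t by omega,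
    show (2 : EReal) = ((2 : ℝ) : EReal) from rfl]
  norm_cast
  ring

lemma halve_mono : Monotone halve := by
  intro x y h
  induction y using EReal.rec with
  | top => simp [halve]
  | bot => simp [le_bot_iff.1 h, halve]
  | coe b =>
    induction x using EReal.rec with
    | bot => simp [halve]
    | top => exact absurd h (by simp)
    | coe a =>
      simp only [halve, EReal.coe_ne_top, EReal.coe_ne_bot, if_false, EReal.toReal_coe]
      exact_mod_cast Int.ceil_le_ceil (by linarith [EReal.coe_le_coe_iff.1 h])

/-- The min-max product `(t* ⋆ x⁺)(i, j)` for `e = 1`, and `(t* ⋆ x⁻)(i, j)` for `e = -1`. -/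
noncomputable def halfDistVia (w : Fin n → Fin n → EReal) (e : EReal) (i j : Fin n) : EReal :=
  ⨅ k, max (halve (dist w i k)) (if w k j = e then (⊥ : EReal) else ⊤)

lemma halve_dist_sub_le_halfDistVia {e : EReal} (he : e ≠ ⊤) :
    halve (dist w i j - e) ≤ halfDistVia w e i j := by
  refine le_iInf fun k => ?_
  split_ifs with hk
  · exact le_max_of_le_left (halve_mono (hk ▸ dist_sub_le_dist_of_edge (hk ▸ he)))
  · exact le_max_of_le_right le_top

lemma halfDistVia_eq_of_edge {e : EReal} (he : e ≠ ⊤) (hk : w k j = e)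
    (hle : dist w i k ≤ dist w i j - e) : halfDistVia w e i j = halve (dist w i j - e) := by
  refine le_antisymm ?_ (halve_dist_sub_le_halfDistVia he)
  calc halfDistVia w e i j ≤ max (halve (dist w i k)) ⊥ := iInf_le_of_le k (by rw [if_pos hk])
      _ ≤ halve (dist w i j - e) := by rw [max_bot_right]; exact halve_mono hle

lemma halfDistVia_eq_halve_sub_one_or_iff_odd {wc : Fin n → Fin n → EReal} (hw : IsIntWeighted w)
    (hc : IsCanonical w wc) (hdc : dist wc i j = dist w i j) {m : ℤ}
    (hm : dist wc i j = ((m : ℝ) : EReal)) :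
    (halfDistVia wc 1 i j = halve (dist wc i j) - 1 ∨
      halfDistVia wc (-1) i j = halve (dist wc i j)) ↔ Odd m := by
  have hsub₁ : halve (dist wc i j - 1) = ((((m - 1 + 1) / 2 : ℤ) : ℝ) : EReal) := by
    rw [← halve_intCast, hm]; norm_cast
  have hsub₂ : halve (dist wc i j - (-1)) = ((((m + 1 + 1) / 2 : ℤ) : ℝ) : EReal) := by
    rw [← halve_intCast, hm, show (-1 : EReal) = ((-1 : ℝ) : EReal) from rfl]; norm_cast
  have hhalf : halve (dist wc i j) - 1 = ((((m + 1) / 2 - 1 : ℤ) : ℝ) : EReal) := by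
    rw [hm, halve_intCast]; norm_cast
  have hone : (1 : EReal) ≠ ⊤ := EReal.coe_ne_top 1
  have hneg_one : (-1 : EReal) ≠ ⊤ := EReal.coe_ne_top (-1)
  rw [hhalf, hm, halve_intCast]
  constructor
  · intro hcond
    by_contra hodd
    obtain ⟨t, rfl⟩ := Int.not_odd_iff_even.1 hodd
    have low₁ := halve_dist_sub_le_halfDistVia (w := wc) (i := i) (j := j) hone
    have low₂ := halve_dist_sub_le_halfDistVia (w := wc) (i := i) (j := j) hneg_one
    rw [hsub₁] at low₁
    rw [hsub₂] at low₂
    rcases hcond with h | h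
    · rw [h] at low₁
      have : (t + t - 1 + 1) / 2 ≤ (t + t + 1) / 2 - 1 := by exact_mod_cast low₁
      omega
    · rw [h] at low₂
      have : (t + t + 1 + 1) / 2 ≤ (t + t + 1) / 2 := by exact_mod_cast low₂
      omega
  · rintro ⟨t, rfl⟩
    obtain ⟨k, hk | hk, hle⟩ := hc.exists_lastEdge_eq_one_or_neg_one hw hdc
      (hm ▸ EReal.coe_ne_top _) (hm ▸ EReal.coe_ne_bot _)
      (by rw [hm]; exact_mod_cast (by omega : 2 * t + 1 ≠ 0))
    · left
      rw [halfDistVia_eq_of_edge hone hk (hk ▸ hle), hsub₁]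
      congr 2
      omega
    · right
      rw [halfDistVia_eq_of_edge hneg_one hk (hk ▸ hle), hsub₂]
      congr 2
      omega

theorem stmt8_general (n : ℕ) (w wc : Fin n → Fin n → EReal)
    (hw : EntriesInMinusOneZeroOneTop w)
    (hc : IsCanonical w wc) (hdc : ∀ p q : Fin n, dist wc p q = dist w p q)
    (i j : Fin n) (hfin : dist wc i j ≠ ⊤ ∧ dist wc i j ≠ ⊥) :
    (((⨅ k : Fin n, max (halve (dist wc i k)) (if wc k j = 1 then (⊥ : EReal) else ⊤))
          = halve (dist wc i j) - 1 ∨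
      (⨅ k : Fin n, max (halve (dist wc i k)) (if wc k j = -1 then (⊥ : EReal) else ⊤))
          = halve (dist wc i j)) →
        dist wc i j = 2 * halve (dist wc i j) - 1) ∧
    (¬((⨅ k : Fin n, max (halve (dist wc i k)) (if wc k j = 1 then (⊥ : EReal) else ⊤))
          = halve (dist wc i j) - 1 ∨
      (⨅ k : Fin n, max (halve (dist wc i k)) (if wc k j = -1 then (⊥ : EReal) else ⊤))
          = halve (dist wc i j)) →
        dist wc i j = 2 * halve (dist wc i j)) := by
  obtain ⟨m, hm⟩ := hc.1.isIntWeighted.exists_dist_eq_intCast hfin.1 hfin.2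
  have hcond := halfDistVia_eq_halve_sub_one_or_iff_odd hw.isIntWeighted hc (hdc i j) hm
  unfold halfDistVia at hcond
  rw [hcond, hm]
  exact ⟨fun hodd => (two_mul_halve_intCast_sub_one_of_odd hodd).symm,
    fun heven => (two_mul_halve_intCast_of_even (Int.not_odd_iff_even.1 heven)).symm⟩

/-- recovering the distance from its half and the two products. -/
theorem stmt8 (n : ℕ) (hn : 1 ≤ n) (w wc : Fin n → Fin n → EReal)
    (hw : EntriesInMinusOneZeroOneTop w)
    (hc : IsCanonical w wc) (hdc : ∀ p q : Fin n, dist wc p q = dist w p q)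
    (i j : Fin n) (hfin : dist wc i j ≠ ⊤ ∧ dist wc i j ≠ ⊥) :
    (((⨅ k : Fin n, max (halve (dist wc i k)) (if wc k j = 1 then (⊥ : EReal) else ⊤))
          = halve (dist wc i j) - 1 ∨
      (⨅ k : Fin n, max (halve (dist wc i k)) (if wc k j = -1 then (⊥ : EReal) else ⊤))
          = halve (dist wc i j)) →
        dist wc i j = 2 * halve (dist wc i j) - 1) ∧
    (¬((⨅ k : Fin n, max (halve (dist wc i k)) (if wc k j = 1 then (⊥ : EReal) else ⊤))
          = halve (dist wc i j) - 1 ∨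
      (⨅ k : Fin n, max (halve (dist wc i k)) (if wc k j = -1 then (⊥ : EReal) else ⊤))
          = halve (dist wc i j)) →
        dist wc i j = 2 * halve (dist wc i j)) :=
  stmt8_general n w wc hw hc hdc i j hfin

end MinMaxAPSP
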